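/- Let k, p be real numbers with k ≥ 3 and p ≥ 3, and let G_1 be the degree-7 polynomial from the factorization H_1 = (x-1)·G_1 at k_1 = k. Then G_1(2) > 0, and consequently G_1 has at least one root γ with 1 < γ < 2. -/
import Mathlib
set_option maxHeartbeats 2000000


/-- The degree-7 polynomial `G_1` in `x` from the factorization `H_1 = (x-1)*G_1` at `k1 = k`. -/
noncomputable def G1 (k p x : ℝ) : ℝ :=
  k^4*(p-1)*x^7*(k*p^2-2*k*p+2*k-1)-k^3*x^6*(3*k^2*p^3-5*k^2*p^2+2*k^2*p+2*k^2-8*k*p^2+15*k*p-13*k+4)+k^2*x^5*(2*k^3*p^4-3*k^3*p^3+10*k^3*p^2-11*k^3*p+4*k^3-4*k^2*p^3-13*k^2*p^2+10*k^2*p-k^2+4*k*p^2+16*k*p-10*k-4)-k^2*x^4*(6*k^3*p^4-9*k^3*p^3+8*k^3*p^2+5*k^3*p-4*k^3-28*k^2*p^3+35*k^2*p^2-52*k^2*p+13*k^2+36*k*p^2-4*k*p+22*k-16*p-12)+k*x^3*(k^4*p^5+3*k^4*p^4+6*k^4*p^3-16*k^4*p^2+13*k^4*p-2*k^4-4*k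^3*p^4-41*k^3*p^3+29*k^3*p^2-6*k^3*p-8*k^3+8*k^2*p^3+96*k^2*p^2-57*k^2*p+18*k^2-8*k*p^2-84*k*p+32*k+4*p+16)-k*x^2*(3*k^4*p^5-3*k^4*p^4+8*k^4*p^3-9*k^4*p+2*k^4-20*k^3*p^4+7*k^3*p^3-49*k^3*p^2+46*k^3*p+48*k^2*p^3+36*k^2*p^2+13*k^2*p-34*k^2-56*k*p^2-60*k*p+24*k+28*p+16)+x*(k^2*p^2+k^2*p-2*k^2-6*k*p+4*k+4)*(3*k^3*p^3-3*k^3*p^2+2*k^3*p-11*k^2*p^2+5*k^2*p-2*k^2+14*k*p-4*k-4)+(1-k*p)*(k^2*p^2+k^2*p-2*k^2-6*k*p+4*k+4)^2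

/-- For `k ≥ 3`, `p ≥ 3`, `G₁(2) > 0`, whence `G₁` has a root `γ ∈ (1,2)`. -/
theorem stmt_13 (k p : ℝ) (hk : 3 ≤ k) (hp : 3 ≤ p) :
    0 < G1 k p 2 ∧ ∃ γ : ℝ, 1 < γ ∧ γ < 2 ∧ G1 k p γ = 0 := by
  have ha0 : 0 ≤ k - 3 := by linarith
  have hb0 : 0 ≤ p - 3 := by linarith
  have h2 : G1 k p 2 = (104336)*(k-3)^0*(p-3)^0 + (157872)*(k-3)^0*(p-3)^1 + (94824)*(k-3)^0*(p-3)^2 + (29403)*(k-3)^0*(p-3)^3 + (4374)*(k-3)^0*(p-3)^4 + (243)*(k-3)^0*(p-3)^5 + (162656)*(k-3)^1*(p-3)^0 + (249376)*(k-3)^1*(p-3)^1 + (150183)*(k-3)^1*(p-3)^2 + (47547)*(k-3)^1*(p-3)^3 + (7209)*(k-3)^1*(p-3)^4 + (405)*(k-3)^1*(p-3)^5 + (101508)*(k-3)^2*(p-3)^0 + (158164)*(k-3)^2*(p-3)^1 + (95028)*(k-3)^2*(p-3)^2 + (30726)*(k-3)^2*(p-3)^3 + (4752)*(k-3)^2*(p-3)^4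 + (270)*(k-3)^2*(p-3)^5 + (31712)*(k-3)^3*(p-3)^0 + (50420)*(k-3)^3*(p-3)^1 + (30030)*(k-3)^3*(p-3)^2 + (9918)*(k-3)^3*(p-3)^3 + (1566)*(k-3)^3*(p-3)^4 + (90)*(k-3)^3*(p-3)^5 + (4964)*(k-3)^4*(p-3)^0 + (8092)*(k-3)^4*(p-3)^1 + (4740)*(k-3)^4*(p-3)^2 + (1599)*(k-3)^4*(p-3)^3 + (258)*(k-3)^4*(p-3)^4 + (15)*(k-3)^4*(p-3)^5 + (312)*(k-3)^5*(p-3)^0 + (524)*(k-3)^5*(p-3)^1 + (299)*(k-3)^5*(p-3)^2 + (103)*(k-3)^5*(p-3)^3 + (17)*(k-3)^5*(p-3)^4 + (1)*(k-3)^5*(p-3)^5 := by unfold G1; ring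
  have h1 : G1 k p 1 = -((2232)*(k-3)^0*(p-3)^0 + (2472)*(k-3)^0*(p-3)^1 + (900)*(k-3)^0*(p-3)^2 + (108)*(k-3)^0*(p-3)^3 + (5784)*(k-3)^1*(p-3)^0 + (6320)*(k-3)^1*(p-3)^1 + (2274)*(k-3)^1*(p-3)^2 + (270)*(k-3)^1*(p-3)^3 + (5658)*(k-3)^2*(p-3)^0 + (6074)*(k-3)^2*(p-3)^1 + (2152)*(k-3)^2*(p-3)^2 + (252)*(k-3)^2*(p-3)^3 + (2658)*(k-3)^3*(p-3)^0 + (2794)*(k-3)^3*(p-3)^1 + (972)*(k-3)^3*(p-3)^2 + (112)*(k-3)^3*(p-3)^3 + (606)*(k-3)^4*(p-3)^0 + (622)*(k-3)^4*(p-3)^1 + (212)*(k-3)^4*(p-3)^2 + (24)*(k-3)^4*(p-3)^3 + (54)*(k-3)^5*(p-3)^0 + (54)*(k-3)^5*(p-3)^1 + (18)*(k-3)^5*(p-3)^2 + (2)*(k-3)^5*(p-3)^3) := by unfold G1; ring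
  have hpos : 0 < G1 k p 2 := by rw [h2]; positivity
  refine ⟨hpos, ?_⟩
  have hneg : G1 k p 1 < 0 := by
    rw [h1]
    have : (0:ℝ) < (2232)*(k-3)^0*(p-3)^0 + (2472)*(k-3)^0*(p-3)^1 + (900)*(k-3)^0*(p-3)^2 + (108)*(k-3)^0*(p-3)^3 + (5784)*(k-3)^1*(p-3)^0 + (6320)*(k-3)^1*(p-3)^1 + (2274)*(k-3)^1*(p-3)^2 + (270)*(k-3)^1*(p-3)^3 + (5658)*(k-3)^2*(p-3)^0 + (6074)*(k-3)^2*(p-3)^1 + (2152)*(k-3)^2*(p-3)^2 + (252)*(k-3)^2*(p-3)^3 + (2658)*(k-3)^3*(p-3)^0 + (2794)*(k-3)^3*(p-3)^1 + (972)*(k-3)^3*(p-3)^2 + (112)*(k-3)^3*(p-3)^3 + (606)*(k-3)^4*(p-3)^0 + (622)*(k-3)^4*(p-3)^1 + (212)*(k-3)^4*(p-3)^2 + (24)*(k-3)^4*(p-3)^3 + (54)*(k-3)^5*(p-3)^0 + (54)*(k-3)^5*(p-3)^1 + (18)*(k-3)^5*(p-3)^2 + (2)*(k-3)^5*(p-3)^3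 := by positivity
    linarith
  have hc : Continuous fun x => G1 k p x := by unfold G1; fun_prop
  have := intermediate_value_Ioo (by norm_num : (1:ℝ) ≤ 2) hc.continuousOn
  have h0 : (0:ℝ) ∈ Set.Ioo (G1 k p 1) (G1 k p 2) := ⟨hneg, hpos⟩
  obtain ⟨γ, hγ, hγ0⟩ := this h0
  exact ⟨γ, hγ.1, hγ.2, hγ0⟩
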